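/- arXiv:2512.21305 — 2 statements merged into one kernel-verified Lean document; each statement's English description precedes it below -/
import Mathlib

section
/- Let B be a graded commutative ℚ-algebra all of whose degree-lowering ℚ-linear derivations vanish, and let A = B[u]/(u²) where u has positive degree m. Let φ : A → A be a graded algebra endomorphism whose restriction-projection φ₁ := p₁ ∘ φ ∘ i₁ : B → B (where A = B ⊕ uB) is a graded automorphism. Then φ(x) = φ₁(x) for all x ∈ B; that is, φ maps B into B. -/
/-!
Writing `φ (ι b) = ι (φ₁ b) + u * ι (P b)` and comparing the two components of
`φ (ι (b * c)) = φ (ι b) * φ (ι c)` (using `u ^ 2 = 0`) shows that `P` is a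
`φ₁`-twisted derivation. Hence `P ∘ φ₁⁻¹` is a ℚ-linear derivation of `B` lowering degree by
`m`, so it vanishes by hypothesis, and `P = 0` because `φ₁` is surjective.
-/

section SquareZeroComponents

variable {R B A : Type*} [CommRing R] [CommRing B] [CommRing A] [Algebra R B] [Algebra R A]
  {ι : B →ₐ[R] A} {u : A}

theorem eq_and_eq_of_add_mul_eq (hfree : ∀ b c : B, ι b + u * ι c = 0 → b = 0 ∧ c = 0)
    {b c b' c' : B} (h : ι b + u * ι c = ι b' + u * ι c') : b = b' ∧ c = c' := by
  have hsub : ι (b - b') + u * ι (c - c') = 0 := by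
    rw [map_sub, map_sub]
    linear_combination h
  obtain ⟨hb, hc⟩ := hfree _ _ hsub
  exact ⟨sub_eq_zero.mp hb, sub_eq_zero.mp hc⟩

variable (hfree : ∀ b c : B, ι b + u * ι c = 0 → b = 0 ∧ c = 0)
  {φ : A →ₐ[R] A} {f P : B → B} (hφ : ∀ b, φ (ι b) = ι (f b) + u * ι (P b))
include hfree hφ

theorem components_add (b c : B) : f (b + c) = f b + f c ∧ P (b + c) = P b + P c := by
  apply eq_and_eq_of_add_mul_eq hfree
  have h : φ (ι (b + c)) = φ (ι b) + φ (ι c) := by rw [map_add, map_add]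
  rw [hφ, hφ, hφ] at h
  simp only [map_add]
  linear_combination h

theorem components_smul (r : R) (b : B) : f (r • b) = r • f b ∧ P (r • b) = r • P b := by
  apply eq_and_eq_of_add_mul_eq hfree
  have h : φ (ι (r • b)) = r • φ (ι b) := by rw [map_smul, map_smul]
  rw [hφ, hφ] at h
  simpa only [map_smul, smul_add, mul_smul_comm] using h

theorem components_mul (hu : u ^ 2 = 0) (b c : B) :
    f (b * c) = f b * f c ∧ P (b * c) = P b * f c + f b * P c := by
  apply eq_and_eq_of_add_mul_eq hfree
  have h : φ (ι (b * c)) = φ (ι b) * φ (ι c) := by rw [map_mul, map_mul]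
  rw [hφ, hφ, hφ] at h
  simp only [map_mul, map_add]
  linear_combination h + ι (P b) * ι (P c) * hu

end SquareZeroComponents

theorem stmt5_general (B A : Type*) [CommRing B] [CommRing A] [Algebra ℚ B] [Algebra ℚ A]
    (ℬ : ℤ → Submodule ℚ B) (m : ℤ)
    (hder : ∀ D : B → B,
      (∀ x y, D (x + y) = D x + D y) →
      (∀ (q : ℚ) (x : B), D (q • x) = q • D x) →
      (∀ x y, D (x * y) = D x * y + x * D y) →
      (∀ i x, x ∈ ℬ i → D x ∈ ℬ (i - m)) →
      ∀ x, D x = 0)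
    (ι : B →ₐ[ℚ] A) (u : A) (hu : u ^ 2 = 0)
    (hfree : ∀ b c : B, ι b + u * ι c = 0 → b = 0 ∧ c = 0)
    (φ : A →ₐ[ℚ] A) (φ₁ : B ≃ₐ[ℚ] B) (P : B → B)
    (hφ : ∀ b : B, φ (ι b) = ι (φ₁ b) + u * ι (P b))
    (hP : ∀ i x, x ∈ ℬ i → P x ∈ ℬ (i - m))
    (hφ₁ : ∀ i x, x ∈ ℬ i → φ₁.symm x ∈ ℬ i) :
    ∀ b : B, φ (ι b) = ι (φ₁ b) := by
  have hD : ∀ x, P (φ₁.symm x) = 0 := by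
    apply hder
    · intro x y
      rw [map_add, (components_add hfree hφ _ _).2]
    · intro q x
      rw [map_smul, (components_smul hfree hφ _ _).2]
    · intro x y
      rw [map_mul, (components_mul hfree hφ hu _ _).2, φ₁.apply_symm_apply, φ₁.apply_symm_apply]
    · exact fun i x hx => hP i _ (hφ₁ i x hx)
  intro b
  have hPb : P b = 0 := by simpa using hD (φ₁ b)
  rw [hφ, hPb, map_zero, mul_zero, add_zero]

/-- if every degree-lowering ℚ-linear derivation of the graded algebra B
vanishes, then a graded endomorphism φ of A = B[u]/(u²) whose B-component φ₁ is an
automorphism maps B into B, i.e. φ(x) = φ₁(x) on B. -/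
theorem stmt5 (B A : Type*) [CommRing B] [CommRing A] [Algebra ℚ B] [Algebra ℚ A]
    (ℬ : ℤ → Submodule ℚ B) (m : ℤ) (hm : 0 < m)
    (hder : ∀ D : B → B,
      (∀ x y, D (x + y) = D x + D y) →
      (∀ (q : ℚ) (x : B), D (q • x) = q • D x) →
      (∀ x y, D (x * y) = D x * y + x * D y) →
      (∀ i x, x ∈ ℬ i → D x ∈ ℬ (i - m)) →
      ∀ x, D x = 0)
    (ι : B →ₐ[ℚ] A) (u : A) (hu : u ^ 2 = 0)
    (hfree : ∀ b c : B, ι b + u * ι c = 0 → b = 0 ∧ c = 0)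
    (φ : A →ₐ[ℚ] A) (φ₁ : B ≃ₐ[ℚ] B) (P : B → B)
    (hφ : ∀ b : B, φ (ι b) = ι (φ₁ b) + u * ι (P b))
    (hP : ∀ i x, x ∈ ℬ i → P x ∈ ℬ (i - m))
    (hφ₁ : ∀ i x, x ∈ ℬ i → φ₁.symm x ∈ ℬ i) :
    ∀ b : B, φ (ι b) = ι (φ₁ b) :=
  stmt5_general B A ℬ m hder ι u hu hfree φ φ₁ P hφ hP hφ₁
end

section
/- Let d be a positive integer and d₀, ..., d_d positive integers with d₀ = d_d = 1. For all nonzero rationals λ₁ and all rationals λ, if ∑_{i=0}^d d_i (-1)^i ≠ 0, then ∑_{i=0}^d d_i λ^i λ₁^{d-i} ≠ 0. -/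
lemma aux_pow_div (x y : ℚ) (hy : y ≠ 0) {i d : ℕ} (h : i ≤ d) :
    (x / y) ^ i * y ^ d = x ^ i * y ^ (d - i) := by
  rw [div_pow, show d = i + (d - i) from (Nat.add_sub_cancel' h).symm, pow_add]
  field_simp
  rw [Nat.add_sub_cancel_left]

lemma aux_P_ne (d : ℕ) (hd : 0 < d) (a : ℕ → ℕ)
    (hpos : ∀ i ≤ d, 0 < a i) (h0 : a 0 = 1) (hdd : a d = 1)
    (halt : (∑ i ∈ Finset.range (d + 1), (a i : ℚ) * (-1 : ℚ) ^ i) ≠ 0)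
    (t : ℚ) : (∑ i ∈ Finset.range (d + 1), (a i : ℚ) * t ^ i) ≠ 0 := by
  intro hP
  set m : ℤ := t.num with hm
  set n : ℤ := (t.den : ℤ) with hn
  have hnq : ((t.den : ℚ)) ≠ 0 := by
    exact_mod_cast t.pos.ne'
  have htmn : t = (m : ℚ) / (n : ℚ) := by
    rw [hm, hn]; push_cast; exact (Rat.num_div_den t).symm
  have hN : ((∑ i ∈ Finset.range (d+1), (a i : ℤ) * m ^ i * n ^ (d - i) : ℤ) : ℚ)
      = 0 := by
    push_cast
    have : ∀ i ∈ Finset.range (d+1),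
        (a i : ℚ) * (m:ℚ) ^ i * (n:ℚ) ^ (d - i)
        = (n:ℚ) ^ d * ((a i : ℚ) * t ^ i) := by
      intro i hi
      have hi' : i ≤ d := Finset.mem_range_succ_iff.mp hi
      have hnq' : (n : ℚ) ≠ 0 := by rw [hn]; push_cast; exact hnq
      rw [htmn]
      have h2 := aux_pow_div (m:ℚ) (n:ℚ) hnq' hi'
      rw [show (n:ℚ)^d * ((a i:ℚ) * ((m:ℚ)/(n:ℚ))^i)
          = (a i:ℚ) * (((m:ℚ)/(n:ℚ))^i * (n:ℚ)^d) from by ring, h2, ← mul_assoc]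
    rw [Finset.sum_congr rfl this, ← Finset.mul_sum, hP, mul_zero]
  have hN0 : (∑ i ∈ Finset.range (d+1), (a i : ℤ) * m ^ i * n ^ (d - i)) = 0 := by
    exact_mod_cast hN
  -- m divides n^d
  have hmd : m ∣ n ^ d := by
    have := Finset.sum_range_succ' (fun i => (a i : ℤ) * m ^ i * n ^ (d - i)) d
    rw [this] at hN0
    simp only [h0, Nat.cast_one, pow_zero, one_mul, Nat.sub_zero] at hN0
    have hdvd : m ∣ ∑ i ∈ Finset.range d, (a (i+1) : ℤ) * m ^ (i+1) * n ^ (d - (i+1)) := by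
      refine Finset.dvd_sum fun i hi => ?_
      exact Dvd.dvd.mul_right (Dvd.dvd.mul_left (dvd_pow_self m (Nat.succ_ne_zero i)) _) _
    have : n ^ d = -(∑ i ∈ Finset.range d, (a (i+1) : ℤ) * m ^ (i+1) * n ^ (d - (i+1))) := by
      linarith [hN0]
    rw [this]
    exact hdvd.neg_right
  -- n divides m^d
  have hnd : n ∣ m ^ d := by
    have := Finset.sum_range_succ (fun i => (a i : ℤ) * m ^ i * n ^ (d - i)) d
    rw [this] at hN0
    simp only [hdd, Nat.cast_one, one_mul, Nat.sub_self, pow_zero, mul_one] at hN0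
    have hdvd : n ∣ ∑ i ∈ Finset.range d, (a i : ℤ) * m ^ i * n ^ (d - i) := by
      refine Finset.dvd_sum fun i hi => ?_
      have : 0 < d - i := Nat.sub_pos_of_lt (Finset.mem_range.mp hi)
      exact Dvd.dvd.mul_left (dvd_pow_self n this.ne') _
    have : m ^ d = -(∑ i ∈ Finset.range d, (a i : ℤ) * m ^ i * n ^ (d - i)) := by
      linarith [hN0]
    rw [this]
    exact hdvd.neg_right
  have hcop : IsCoprime m n := by
    rw [Int.isCoprime_iff_gcd_eq_one]
    exact t.reduced
  have hmu : IsUnit m := (hcop.pow_right (n := d)).isUnit_of_dvd' dvd_rfl hmd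
  have hnu : IsUnit n := (hcop.symm.pow_right (n := d)).isUnit_of_dvd' dvd_rfl hnd
  have hn1 : n = 1 := by
    rcases Int.isUnit_iff.mp hnu with h | h
    · exact h
    · exfalso; rw [hn] at h; omega
  have hm1 : m = 1 ∨ m = -1 := Int.isUnit_iff.mp hmu
  have ht : t = 1 ∨ t = -1 := by
    rcases hm1 with h | h
    · left; rw [htmn, h, hn1]; norm_num
    · right; rw [htmn, h, hn1]; norm_num
  rcases ht with h | h
  · rw [h] at hP
    have : (0:ℚ) < ∑ i ∈ Finset.range (d+1), (a i : ℚ) * (1:ℚ) ^ i := by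
      refine Finset.sum_pos (fun i hi => ?_) ⟨0, by simp⟩
      have := hpos i (Finset.mem_range_succ_iff.mp hi)
      simp only [one_pow, mul_one]
      exact_mod_cast this
    exact this.ne' hP
  · rw [h] at hP
    exact halt hP

/-- nonvanishing of the weighted sum ∑ d_i λ^i λ₁^{d-i}. -/
theorem stmt11 (d : ℕ) (hd : 0 < d) (a : ℕ → ℕ)
    (hpos : ∀ i ≤ d, 0 < a i) (h0 : a 0 = 1) (hdd : a d = 1) :
    ∀ l1 : ℚ, l1 ≠ 0 → ∀ l : ℚ,
      (∑ i ∈ Finset.range (d + 1), (a i : ℚ) * (-1 : ℚ) ^ i) ≠ 0 →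
      (∑ i ∈ Finset.range (d + 1), (a i : ℚ) * l ^ i * l1 ^ (d - i)) ≠ 0 := by
  intro l1 hl1 l halt
  have key := aux_P_ne d hd a hpos h0 hdd halt (l / l1)
  have hid : (∑ i ∈ Finset.range (d + 1), (a i : ℚ) * l ^ i * l1 ^ (d - i))
      = l1 ^ d * ∑ i ∈ Finset.range (d + 1), (a i : ℚ) * (l / l1) ^ i := by
    rw [Finset.mul_sum]
    refine Finset.sum_congr rfl fun i hi => ?_
    have h2 := aux_pow_div l l1 hl1 (Finset.mem_range_succ_iff.mp hi)
    rw [show l1^d * ((a i:ℚ) * (l/l1)^i) = (a i:ℚ) * ((l/l1)^i * l1^d) from by ring,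
      h2, ← mul_assoc]
  rw [hid]
  exact mul_ne_zero (pow_ne_zero d hl1) key
end
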